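/- Let μ be a compactly supported probability measure on ℂ, let t > 0 and γ ∈ ℂ with |γ| ≤ t, and suppose U ⊆ ℂ \ supp(μ) is a set on which ∫ |λ − z|⁻² dμ(z) < 1/t for every λ ∈ U. Define Φ(λ) = λ + γ G(λ), where G is the Cauchy transform of μ. Then Φ is injective on U. -/

import Mathlib

open MeasureTheory

/-- The (closed) support of a Borel measure. -/
def MeasureTheory.Measure.msupport {α : Type*} [TopologicalSpace α] [MeasurableSpace α]
    (μ : Measure α) : Set α :=
  {x | ∀ U ∈ nhds x, 0 < μ U}

/-!
Writing `G` for the Cauchy transform, `G y - G x = (x - y) ∫ (x - z)⁻¹ (y - z)⁻¹ dμ(z)`, and by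
AM–GM the last integral has norm at most the mean of `∫ |x - z|⁻² dμ` and `∫ |y - z|⁻² dμ`,
which is `< 1/t` on `U`. So `G` is a strict `1/t`-contraction on `U`, and `λ + γ G(λ)` with
`|γ| ≤ t` is a perturbation of the identity too small to identify two points.
-/

theorem Set.injOn_add_mul_of_norm_sub_lt {𝕜 : Type*} [NormedField 𝕜] {f : 𝕜 → 𝕜} {U : Set 𝕜}
    {t : ℝ} (ht : 0 < t) {γ : 𝕜} (hγ : ‖γ‖ ≤ t)
    (hf : ∀ x ∈ U, ∀ y ∈ U, x ≠ y → ‖f x - f y‖ < ‖x - y‖ / t) :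
    Set.InjOn (fun x => x + γ * f x) U := by
  intro x hx y hy hxy
  by_contra hne
  have hsub : x - y = γ * (f y - f x) := by linear_combination hxy
  have hlt : t * ‖f y - f x‖ < ‖x - y‖ := by
    rw [norm_sub_rev (f y)]
    exact (lt_div_iff₀' ht).1 (hf x hx y hy hne)
  have hle : ‖x - y‖ ≤ t * ‖f y - f x‖ := by
    rw [hsub, norm_mul]
    gcongr
  linarith

namespace MeasureTheory.Measure

theorem exists_pos_ae_le_dist_of_notMem_msupport {α : Type*} [PseudoMetricSpace α]
    [MeasurableSpace α] {μ : Measure α} {x : α} (hx : x ∉ μ.msupport) :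
    ∃ r > 0, ∀ᵐ z ∂μ, r ≤ dist x z := by
  simp only [msupport, Set.mem_ofPred_eq, not_forall, not_lt, nonpos_iff_eq_zero] at hx
  obtain ⟨V, hV, hV0⟩ := hx
  obtain ⟨r, hr, hball⟩ := Metric.mem_nhds_iff.1 hV
  have hball0 : μ (Metric.ball x r) = 0 := measure_mono_null hball hV0
  refine ⟨r, hr, ?_⟩
  filter_upwards [measure_eq_zero_iff_ae_notMem.1 hball0] with z hz
  simpa [dist_comm] using hz

end MeasureTheory.Measure

namespace Complex

noncomputable def cauchyTransform (μ : Measure ℂ) (x : ℂ) : ℂ :=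
  ∫ z, (x - z)⁻¹ ∂μ

variable {μ : Measure ℂ} {x y : ℂ}

theorem integrable_inv_sub_of_notMem_msupport [IsFiniteMeasure μ] (hx : x ∉ μ.msupport) :
    Integrable (fun z => (x - z)⁻¹) μ := by
  obtain ⟨r, hr, hdist⟩ := μ.exists_pos_ae_le_dist_of_notMem_msupport hx
  refine .of_bound (by fun_prop) r⁻¹ (hdist.mono fun z hz => ?_)
  rw [norm_inv, ← dist_eq_norm]
  exact inv_anti₀ hr hz

theorem integrable_inv_norm_sub_sq_of_notMem_msupport [IsFiniteMeasure μ]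
    (hx : x ∉ μ.msupport) : Integrable (fun z => (‖x - z‖ ^ 2)⁻¹) μ := by
  obtain ⟨r, hr, hdist⟩ := μ.exists_pos_ae_le_dist_of_notMem_msupport hx
  refine .of_bound (by fun_prop) (r ^ 2)⁻¹ (hdist.mono fun z hz => ?_)
  rw [Real.norm_of_nonneg (by positivity), ← dist_eq_norm]
  exact inv_anti₀ (by positivity) (pow_le_pow_left₀ hr.le hz 2)

theorem cauchyTransform_sub_cauchyTransform [IsFiniteMeasure μ] (hx : x ∉ μ.msupport)
    (hy : y ∉ μ.msupport) :
    cauchyTransform μ y - cauchyTransform μ x = (x - y) * ∫ z, (x - z)⁻¹ * (y - z)⁻¹ ∂μ := by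
  obtain ⟨r, hr, hxdist⟩ := μ.exists_pos_ae_le_dist_of_notMem_msupport hx
  obtain ⟨s, hs, hydist⟩ := μ.exists_pos_ae_le_dist_of_notMem_msupport hy
  rw [cauchyTransform, cauchyTransform, ← integral_sub (integrable_inv_sub_of_notMem_msupport hy)
    (integrable_inv_sub_of_notMem_msupport hx), ← integral_const_mul]
  refine integral_congr_ae (hxdist.and hydist |>.mono fun z ⟨hxz, hyz⟩ => ?_)
  have hxz₀ : x - z ≠ 0 := sub_ne_zero.2 (dist_pos.1 (hr.trans_le hxz))
  have hyz₀ : y - z ≠ 0 := sub_ne_zero.2 (dist_pos.1 (hs.trans_le hyz))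
  field_simp
  ring

theorem norm_integral_inv_sub_mul_inv_sub_le [IsFiniteMeasure μ] (hx : x ∉ μ.msupport)
    (hy : y ∉ μ.msupport) :
    ‖∫ z, (x - z)⁻¹ * (y - z)⁻¹ ∂μ‖ ≤
      ((∫ z, (‖x - z‖ ^ 2)⁻¹ ∂μ) + ∫ z, (‖y - z‖ ^ 2)⁻¹ ∂μ) / 2 := by
  rw [← integral_add (integrable_inv_norm_sub_sq_of_notMem_msupport hx)
    (integrable_inv_norm_sub_sq_of_notMem_msupport hy), ← integral_div]
  refine norm_integral_le_of_norm_le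
    (((integrable_inv_norm_sub_sq_of_notMem_msupport hx).add
      (integrable_inv_norm_sub_sq_of_notMem_msupport hy)).div_const 2) (.of_forall fun z => ?_)
  rw [norm_mul, norm_inv, norm_inv, ← inv_pow, ← inv_pow]
  linarith [two_mul_le_add_sq ‖x - z‖⁻¹ ‖y - z‖⁻¹]

theorem norm_cauchyTransform_sub_le [IsFiniteMeasure μ] (hx : x ∉ μ.msupport)
    (hy : y ∉ μ.msupport) :
    ‖cauchyTransform μ x - cauchyTransform μ y‖ ≤
      ‖x - y‖ * (((∫ z, (‖x - z‖ ^ 2)⁻¹ ∂μ) + ∫ z, (‖y - z‖ ^ 2)⁻¹ ∂μ) / 2) := by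
  rw [norm_sub_rev, cauchyTransform_sub_cauchyTransform hx hy, norm_mul]
  gcongr
  exact norm_integral_inv_sub_mul_inv_sub_le hx hy

end Complex

theorem injOn_lam_add_gamma_cauchy_general (μ : Measure ℂ) [IsProbabilityMeasure μ]
    (t : ℝ) (ht : 0 < t) (γ : ℂ) (hγ : ‖γ‖ ≤ t)
    (U : Set ℂ) (hU : U ⊆ μ.msupportᶜ)
    (hbound : ∀ lam ∈ U, (∫ z, (‖lam - z‖ ^ 2)⁻¹ ∂μ) < 1 / t) :
    Set.InjOn (fun lam => lam + γ * ∫ z, (lam - z)⁻¹ ∂μ) U := by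
  refine Set.injOn_add_mul_of_norm_sub_lt (f := Complex.cauchyTransform μ) ht hγ
    fun x hx y hy hne => ?_
  have hmean : ((∫ z, (‖x - z‖ ^ 2)⁻¹ ∂μ) + ∫ z, (‖y - z‖ ^ 2)⁻¹ ∂μ) / 2 < 1 / t := by
    linarith [hbound x hx, hbound y hy]
  calc ‖Complex.cauchyTransform μ x - Complex.cauchyTransform μ y‖
      ≤ ‖x - y‖ * (((∫ z, (‖x - z‖ ^ 2)⁻¹ ∂μ) + ∫ z, (‖y - z‖ ^ 2)⁻¹ ∂μ) / 2) :=
        Complex.norm_cauchyTransform_sub_le (hU hx) (hU hy)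
    _ < ‖x - y‖ * (1 / t) := by gcongr; exact norm_pos_iff.2 (sub_ne_zero.2 hne)
    _ = ‖x - y‖ / t := mul_one_div _ _

/-- Let `μ` be a compactly supported probability measure on `ℂ`, `t > 0`, `γ ∈ ℂ` with
`|γ| ≤ t`, and `U` a subset of the complement of `supp μ` on which
`∫ |λ-z|⁻² dμ(z) < 1/t`. Then `Φ(λ) = λ + γ G(λ)` (with `G` the Cauchy transform of `μ`)
is injective on `U`. -/
theorem injOn_lam_add_gamma_cauchy (μ : Measure ℂ) [IsProbabilityMeasure μ]
    (hcomp : IsCompact μ.msupport) (t : ℝ) (ht : 0 < t) (γ : ℂ) (hγ : ‖γ‖ ≤ t)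
    (U : Set ℂ) (hU : U ⊆ μ.msupportᶜ)
    (hbound : ∀ lam ∈ U, (∫ z, (‖lam - z‖ ^ 2)⁻¹ ∂μ) < 1 / t) :
    Set.InjOn (fun lam => lam + γ * ∫ z, (lam - z)⁻¹ ∂μ) U :=
  injOn_lam_add_gamma_cauchy_general μ t ht γ hγ U hU hbound
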